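/- arXiv:1406.6170 — 8 statements merged into one kernel-verified Lean document; each statement's English description precedes it below -/
import Mathlib

section
/- For a 1-dimensional subspace V of F_q^b spanned by a nonzero vector v, the subspace P_V := span{φ(v; e_i) : i ≠ r(v)} has dimension b−1; that is, the vectors φ(v; e_i) for i in [b], i ≠ r(v), are linearly independent. -/
/-- The Plücker embedding of the 2×b matrix with rows `a`, `c`:
indexed by pairs (i,j) with i < j, coordinate a_i·c_j − a_j·c_i. -/
def plucker {F : Type*} [Field F] {b : ℕ} (a c : Fin b → F) :
    {p : Fin b × Fin b // p.1 < p.2} → F :=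
  fun p => a p.1.1 * c p.1.2 - a p.1.2 * c p.1.1

/-! For `j ≠ r`, the coordinate of `φ(v; e_j)` at the pair `{i, r}` is `±v r` if `j = i` and `0`
otherwise. Restricted to these `b - 1` coordinates, the vectors `φ(v; e_j)` therefore form a diagonal
matrix with nonzero diagonal, so they are linearly independent whenever `v r ≠ 0`. -/

section

variable {F : Type*} [Field F] {b : ℕ}

def sortedPair (r : Fin b) (i : {i : Fin b // i ≠ r}) : {p : Fin b × Fin b // p.1 < p.2} :=
  if h : i.1 < r then ⟨(i, r), h⟩ else ⟨(r, i), i.2.lt_or_gt.resolve_left h⟩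

theorem plucker_single_sortedPair (v : Fin b → F) {r : Fin b} (i j : {i : Fin b // i ≠ r}) :
    plucker v (Pi.single j.1 1) (sortedPair r i) =
      (Pi.single j (if j.1 < r then -v r else v r) : {i : Fin b // i ≠ r} → F) i := by
  have hjr : r ≠ j.1 := j.2.symm
  rcases eq_or_ne j i with rfl | hji
  · unfold sortedPair
    split_ifs <;> simp [plucker, hjr]
  · have hij : i.1 ≠ j.1 := fun h => hji (Subtype.ext h).symm
    unfold sortedPair
    split_ifs <;> simp [plucker, hjr, hij, hji.symm]

theorem linearIndependent_plucker_single (v : Fin b → F) {r : Fin b} (hr : v r ≠ 0) :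
    LinearIndependent F (fun i : {i : Fin b // i ≠ r} => plucker v (Pi.single i.1 (1 : F))) := by
  refine .of_comp (LinearMap.funLeft F F (sortedPair r)) ?_
  have hpivot : ∀ j : {i : Fin b // i ≠ r}, (if j.1 < r then -v r else v r) ≠ 0 := fun j => by
    split_ifs <;> simpa
  have hdiag : LinearMap.funLeft F F (sortedPair r) ∘
      (fun i : {i : Fin b // i ≠ r} => plucker v (Pi.single i.1 (1 : F))) =
      fun j => Pi.single j (if j.1 < r then -v r else v r) := by
    funext j i
    exact plucker_single_sortedPair v i j
  rw [hdiag]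
  exact Pi.linearIndependent_single_of_ne_zero hpivot

end

theorem plucker_subspace_dim_general {F : Type*} [Field F] {b : ℕ}
    (v : Fin b → F) (r : Fin b)
    (hr : v r ≠ 0) :
    LinearIndependent F
      (fun i : {i : Fin b // i ≠ r} => plucker v (Pi.single i.1 (1 : F))) ∧
    Module.finrank F
      (Submodule.span F ((fun i => plucker v (Pi.single i (1 : F))) '' {i | i ≠ r})) =
        b - 1 := by
  have hli := linearIndependent_plucker_single v hr
  refine ⟨hli, ?_⟩
  rw [Set.image_eq_range]
  exact (finrank_span_eq_card hli).trans (by simp [Fintype.card_subtype_compl])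

theorem plucker_subspace_dim {F : Type*} [Field F] {b : ℕ}
    (v : Fin b → F) (r : Fin b)
    (hr : v r ≠ 0) (hrmin : ∀ i : Fin b, i < r → v i = 0) :
    LinearIndependent F
      (fun i : {i : Fin b // i ≠ r} => plucker v (Pi.single i.1 (1 : F))) ∧
    Module.finrank F
      (Submodule.span F ((fun i => plucker v (Pi.single i (1 : F))) '' {i | i ≠ r})) =
        b - 1 :=
  plucker_subspace_dim_general v r hr
end

section
/- Let U and V be distinct 1-dimensional subspaces of F_q^b, with U = span{u} and V = span{v}. Then the intersection P_U ∩ P_V equals the span of φ(u; v); in particular, dim(P_U ∩ P_V) = 1. -/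
/-!
Writing `φ(u; c) = u ∧ c`, the space `P_U` is the image of the linear map `c ↦ u ∧ c`: the
coordinate `c_r` can be removed by subtracting a multiple of `u`, since `u ∧ u = 0`. If
`u ∧ c = v ∧ d` and `u ∧ v ≠ 0`, then all 2×2 minors of the pairs agree, and Cramer's rule on
a nonvanishing minor of `(u, v)` writes `c = α u + β v`, so `u ∧ c = β (u ∧ v)`. Conversely
`u ∧ v = v ∧ (-u)` lies in both spaces, and `u ∧ v ≠ 0` because `u` and `v` are not proportional.
-/

open Submodule

lemma Pi.mem_span_single_of_apply_eq_zero {R ι : Type*} [Semiring R] [Fintype ι] [DecidableEq ι]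
    {w : ι → R} {r : ι} (hw : w r = 0) :
    w ∈ span R ((fun i => Pi.single i (1 : R)) '' {i | i ≠ r}) := by
  rw [← (Pi.basisFun R ι).sum_repr w]
  refine sum_mem fun i _ => ?_
  by_cases hi : i = r
  · simp [hi, hw]
  · exact smul_mem _ _ (subset_span ⟨i, hi, by simp⟩)

namespace plucker

variable {F : Type*} [Field F] {b : ℕ}

def linearMap (u : Fin b → F) : (Fin b → F) →ₗ[F] ({p : Fin b × Fin b // p.1 < p.2} → F) where
  toFun := plucker u
  map_add' c d := by funext p; simp only [plucker, Pi.add_apply]; ring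
  map_smul' r c := by
    funext p; simp only [plucker, Pi.smul_apply, smul_eq_mul, RingHom.id_apply]; ring

lemma linearMap_apply (u c : Fin b → F) : linearMap u c = plucker u c := rfl

@[simp]
lemma self (u : Fin b → F) : plucker u u = 0 := by
  funext p; simp only [plucker, Pi.zero_apply]; ring

lemma swap (u v : Fin b → F) : plucker v u = -plucker u v := by
  funext p; simp only [plucker, Pi.neg_apply]; ring

lemma minor_eq_of_eq {a c a' c' : Fin b → F} (h : plucker a c = plucker a' c') (i j : Fin b) :
    a i * c j - a j * c i = a' i * c' j - a' j * c' i := by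
  rcases lt_trichotomy i j with hij | rfl | hij
  · exact congrFun h ⟨(i, j), hij⟩
  · ring
  · have hji : a j * c i - a i * c j = a' j * c' i - a' i * c' j := congrFun h ⟨(j, i), hij⟩
    linear_combination -hji

lemma eq_smul_of_eq_zero {u v : Fin b → F} {r : Fin b} (hr : u r ≠ 0) (h : plucker u v = 0) :
    v = (v r / u r) • u := by
  funext j
  have hminor := minor_eq_of_eq (h.trans (linearMap u).map_zero.symm) r j
  simp only [Pi.smul_apply, smul_eq_mul, Pi.zero_apply, mul_zero, sub_zero] at hminor ⊢
  field_simp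
  linear_combination hminor

lemma ne_zero_of_span_ne {u v : Fin b → F} {r s : Fin b} (hr : u r ≠ 0) (hs : v s ≠ 0)
    (hUV : span F {u} ≠ span F {v}) : plucker u v ≠ 0 := by
  intro h
  have hv := eq_smul_of_eq_zero hr h
  have hunit : IsUnit (v r / u r) := by
    refine (div_ne_zero (fun h0 => hs ?_) hr).isUnit
    simpa [h0] using congrFun hv s
  exact hUV (by rw [hv, span_singleton_smul_eq hunit])

lemma span_image_single_eq_range {u : Fin b → F} {r : Fin b} (hr : u r ≠ 0) :
    span F ((fun i => plucker u (Pi.single i (1 : F))) '' {i | i ≠ r}) =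
      LinearMap.range (linearMap u) := by
  have himage : (fun i => plucker u (Pi.single i (1 : F))) '' {i | i ≠ r} =
      linearMap u '' ((fun i => Pi.single i (1 : F)) '' {i | i ≠ r}) := by
    rw [Set.image_image]; rfl
  rw [himage, span_image]
  refine le_antisymm LinearMap.map_le_range ?_
  rintro _ ⟨c, rfl⟩
  have hcr : (c - (c r / u r) • u) r = 0 := by
    simp only [Pi.sub_apply, Pi.smul_apply, smul_eq_mul]
    field_simp
    ring
  have hc : linearMap u c = linearMap u (c - (c r / u r) • u) := by
    rw [map_sub, map_smul, linearMap_apply u u, self, smul_zero, sub_zero]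
  exact hc ▸ mem_map_of_mem (Pi.mem_span_single_of_apply_eq_zero hcr)

lemma exists_eq_smul_add_smul_of_eq {u v c d : Fin b → F} (huv : plucker u v ≠ 0)
    (h : plucker u c = plucker v d) : ∃ α β : F, c = α • u + β • v := by
  obtain ⟨⟨⟨s, t⟩, _⟩, hst_ne⟩ := Function.ne_iff.mp huv
  have hδ : u s * v t - u t * v s ≠ 0 := hst_ne
  set δ := u s * v t - u t * v s
  refine ⟨(c s * v t - c t * v s) / δ, (u s * c t - u t * c s) / δ, funext fun k => ?_⟩
  simp only [Pi.add_apply, Pi.smul_apply, smul_eq_mul]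
  field_simp
  linear_combination v t * minor_eq_of_eq h s k - v s * minor_eq_of_eq h t k
    - v k * minor_eq_of_eq h s t

lemma range_inf_range_le_span {u v : Fin b → F} (huv : plucker u v ≠ 0) :
    LinearMap.range (linearMap u) ⊓ LinearMap.range (linearMap v) ≤ span F {plucker u v} := by
  rintro _ ⟨⟨c, rfl⟩, ⟨d, hd⟩⟩
  obtain ⟨α, β, rfl⟩ := exists_eq_smul_add_smul_of_eq huv hd.symm
  refine mem_span_singleton.mpr ⟨β, ?_⟩
  simp only [map_add, map_smul, linearMap_apply, self, smul_zero, zero_add]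

lemma span_le_range_inf_range (u v : Fin b → F) :
    span F {plucker u v} ≤ LinearMap.range (linearMap u) ⊓ LinearMap.range (linearMap v) := by
  rw [span_le, Set.singleton_subset_iff]
  exact ⟨⟨v, rfl⟩, ⟨-u, by rw [map_neg, linearMap_apply, swap, neg_neg]⟩⟩

end plucker

theorem plucker_subspaces_intersection_general {F : Type*} [Field F] {b : ℕ}
    (u v : Fin b → F)
    (hUV : Submodule.span F {u} ≠ Submodule.span F {v})
    (ru rv : Fin b)
    (hru : u ru ≠ 0)
    (hrv : v rv ≠ 0) :
    (Submodule.span F ((fun i => plucker u (Pi.single i (1 : F))) '' {i | i ≠ ru})) ⊓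
      (Submodule.span F ((fun i => plucker v (Pi.single i (1 : F))) '' {i | i ≠ rv})) =
      Submodule.span F {plucker u v} ∧
    Module.finrank F
      ((Submodule.span F ((fun i => plucker u (Pi.single i (1 : F))) '' {i | i ≠ ru})) ⊓
        (Submodule.span F ((fun i => plucker v (Pi.single i (1 : F))) '' {i | i ≠ rv})) :
        Submodule F _) = 1 := by
  have huv : plucker u v ≠ 0 := plucker.ne_zero_of_span_ne hru hrv hUV
  have hinf : (span F ((fun i => plucker u (Pi.single i (1 : F))) '' {i | i ≠ ru})) ⊓
      (span F ((fun i => plucker v (Pi.single i (1 : F))) '' {i | i ≠ rv})) =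
      span F {plucker u v} := by
    rw [plucker.span_image_single_eq_range hru, plucker.span_image_single_eq_range hrv]
    exact le_antisymm (plucker.range_inf_range_le_span huv) (plucker.span_le_range_inf_range u v)
  exact ⟨hinf, hinf ▸ finrank_span_singleton huv⟩

theorem plucker_subspaces_intersection {F : Type*} [Field F] {b : ℕ}
    (u v : Fin b → F) (hu : u ≠ 0) (hv : v ≠ 0)
    (hUV : Submodule.span F {u} ≠ Submodule.span F {v})
    (ru rv : Fin b)
    (hru : u ru ≠ 0) (hrumin : ∀ i : Fin b, i < ru → u i = 0)
    (hrv : v rv ≠ 0) (hrvmin : ∀ i : Fin b, i < rv → v i = 0) :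
    (Submodule.span F ((fun i => plucker u (Pi.single i (1 : F))) '' {i | i ≠ ru})) ⊓
      (Submodule.span F ((fun i => plucker v (Pi.single i (1 : F))) '' {i | i ≠ rv})) =
      Submodule.span F {plucker u v} ∧
    Module.finrank F
      ((Submodule.span F ((fun i => plucker u (Pi.single i (1 : F))) '' {i | i ≠ ru})) ⊓
        (Submodule.span F ((fun i => plucker v (Pi.single i (1 : F))) '' {i | i ≠ rv})) :
        Submodule F _) = 1 :=
  plucker_subspaces_intersection_general u v hUV ru rv hru hrv
end

section
/- For distinct 1-subspaces U, V of F_q^b, the subspace distance d_S(P_U, P_V) = dim P_U + dim P_V − 2·dim(P_U ∩ P_V) equals 2b − 4. -/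
open Submodule LinearMap Module

section

variable {F : Type*} [Field F] {b : ℕ}

def pluckerₗ (a : Fin b → F) :
    (Fin b → F) →ₗ[F] ({p : Fin b × Fin b // p.1 < p.2} → F) where
  toFun := plucker a
  map_add' c d := by ext p; simp only [plucker, Pi.add_apply]; ring
  map_smul' t c := by
    ext p; simp only [plucker, Pi.smul_apply, smul_eq_mul, RingHom.id_apply]; ring

@[simp]
lemma pluckerₗ_apply (a c : Fin b → F) : pluckerₗ a c = plucker a c := rfl

@[simp]
lemma plucker_self (a : Fin b → F) : plucker a a = 0 := by
  ext p; simp only [plucker, Pi.zero_apply]; ring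

lemma plucker_eq_plucker_iff {a c a' c' : Fin b → F} :
    plucker a c = plucker a' c' ↔
      ∀ i j, a i * c j - a j * c i = a' i * c' j - a' j * c' i := by
  refine ⟨fun h i j => ?_, fun h => funext fun p => h p.1.1 p.1.2⟩
  rcases lt_trichotomy i j with hij | rfl | hij
  · exact congrFun h ⟨(i, j), hij⟩
  · ring
  · have h' := congrFun h ⟨(j, i), hij⟩
    simp only [plucker] at h'
    linear_combination -h'

lemma plucker_eq_zero_iff {a c : Fin b → F} :
    plucker a c = 0 ↔ ∀ i j, a i * c j = a j * c i := by
  rw [← plucker_self 0, plucker_eq_plucker_iff]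
  simp only [Pi.zero_apply, mul_zero, sub_zero, sub_eq_zero]

lemma ker_pluckerₗ {a : Fin b → F} (ha : a ≠ 0) : ker (pluckerₗ a) = span F {a} := by
  obtain ⟨r, hr⟩ := Function.ne_iff.1 ha
  ext c
  rw [mem_ker, pluckerₗ_apply, plucker_eq_zero_iff, mem_span_singleton]
  constructor
  · intro h
    refine ⟨c r / a r, funext fun j => ?_⟩
    rw [Pi.smul_apply, smul_eq_mul, div_mul_eq_mul_div, div_eq_iff hr]
    linear_combination -h r j
  · rintro ⟨t, rfl⟩ i j
    simp only [Pi.smul_apply, smul_eq_mul]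
    ring

lemma finrank_range_pluckerₗ {a : Fin b → F} (ha : a ≠ 0) :
    finrank F (range (pluckerₗ a)) = b - 1 := by
  have h := finrank_range_add_finrank_ker (pluckerₗ a)
  rw [ker_pluckerₗ ha, finrank_span_singleton ha, finrank_fin_fun] at h
  omega

lemma span_plucker_single_eq_range {a : Fin b → F} {r : Fin b} (hr : a r ≠ 0) :
    span F ((fun i => plucker a (Pi.single i (1 : F))) '' {i | i ≠ r}) =
      range (pluckerₗ a) := by
  apply le_antisymm
  · rw [span_le]
    rintro _ ⟨i, -, rfl⟩
    exact ⟨Pi.single i 1, rfl⟩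
  · rintro _ ⟨c, rfl⟩
    set c' := c - (c r / a r) • a
    have hc : pluckerₗ a c = pluckerₗ a c' := by
      simp only [c', map_sub, map_smul, pluckerₗ_apply, plucker_self, smul_zero, sub_zero]
    have hc'r : c' r = 0 := by
      simp only [c', Pi.sub_apply, Pi.smul_apply, smul_eq_mul, div_mul_cancel₀ _ hr, sub_self]
    rw [hc, ← Finset.univ_sum_single c', map_sum]
    refine sum_mem fun i _ => ?_
    rcases eq_or_ne i r with rfl | hi
    · rw [hc'r, Pi.single_zero, map_zero]
      exact zero_mem _
    · rw [← mul_one (c' i), ← smul_eq_mul, Pi.single_smul', map_smul]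
      exact smul_mem _ _ (subset_span ⟨i, hi, rfl⟩)

lemma plucker_ne_zero {a c : Fin b → F} (ha : a ≠ 0) (hc : c ≠ 0)
    (h : span F {a} ≠ span F {c}) : plucker a c ≠ 0 := by
  intro h0
  obtain ⟨t, rfl⟩ := mem_span_singleton.1 (ker_pluckerₗ ha ▸ h0 : c ∈ span F {a})
  have ht : t ≠ 0 := by rintro rfl; exact hc (zero_smul F a)
  exact h (span_singleton_smul_eq (isUnit_iff_ne_zero.2 ht) a).symm

lemma range_pluckerₗ_inf_range_pluckerₗ {a c : Fin b → F} (h : plucker a c ≠ 0) :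
    range (pluckerₗ a) ⊓ range (pluckerₗ c) = span F {plucker a c} := by
  obtain ⟨⟨⟨p, q⟩, _⟩, hD⟩ := Function.ne_iff.1 h
  simp only [plucker, Pi.zero_apply] at hD
  apply le_antisymm
  · rintro _ ⟨⟨y, rfl⟩, z, hz⟩
    have key := plucker_eq_plucker_iff.1 hz.symm
    refine mem_span_singleton.2
      ⟨(a p * y q - a q * y p) / (a p * c q - a q * c p), funext fun ⟨⟨i, j⟩, _⟩ => ?_⟩
    simp only [Pi.smul_apply, smul_eq_mul, pluckerₗ_apply, plucker]
    rw [div_mul_eq_mul_div, div_eq_iff hD]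
    linear_combination -(a p * c q - a q * c p) * key i j
      + c j * a p * key i q - c j * a q * key i p - c i * a p * key j q + c i * a q * key j p
  · rw [span_le, Set.singleton_subset_iff]
    refine ⟨⟨c, rfl⟩, -a, ?_⟩
    ext p
    simp only [pluckerₗ_apply, plucker, Pi.neg_apply]
    ring

end

theorem plucker_subspace_distance_general {F : Type*} [Field F] {b : ℕ}
    (u v : Fin b → F) (hu : u ≠ 0) (hv : v ≠ 0)
    (hUV : Submodule.span F {u} ≠ Submodule.span F {v})
    (ru rv : Fin b)
    (hru : u ru ≠ 0)
    (hrv : v rv ≠ 0) :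
    Module.finrank F
      (Submodule.span F ((fun i => plucker u (Pi.single i (1 : F))) '' {i | i ≠ ru})) +
    Module.finrank F
      (Submodule.span F ((fun i => plucker v (Pi.single i (1 : F))) '' {i | i ≠ rv})) -
    2 * Module.finrank F
      ((Submodule.span F ((fun i => plucker u (Pi.single i (1 : F))) '' {i | i ≠ ru})) ⊓
       (Submodule.span F ((fun i => plucker v (Pi.single i (1 : F))) '' {i | i ≠ rv})) :
        Submodule F ({p : Fin b × Fin b // p.1 < p.2} → F)) = 2 * b - 4 := by
  have huv := plucker_ne_zero hu hv hUV
  rw [span_plucker_single_eq_range hru, span_plucker_single_eq_range hrv,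
    range_pluckerₗ_inf_range_pluckerₗ huv, finrank_span_singleton huv,
    finrank_range_pluckerₗ hu, finrank_range_pluckerₗ hv]
  omega

theorem plucker_subspace_distance {F : Type*} [Field F] {b : ℕ}
    (u v : Fin b → F) (hu : u ≠ 0) (hv : v ≠ 0)
    (hUV : Submodule.span F {u} ≠ Submodule.span F {v})
    (ru rv : Fin b)
    (hru : u ru ≠ 0) (hrumin : ∀ i : Fin b, i < ru → u i = 0)
    (hrv : v rv ≠ 0) (hrvmin : ∀ i : Fin b, i < rv → v i = 0) :
    Module.finrank F
      (Submodule.span F ((fun i => plucker u (Pi.single i (1 : F))) '' {i | i ≠ ru})) +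
    Module.finrank F
      (Submodule.span F ((fun i => plucker v (Pi.single i (1 : F))) '' {i | i ≠ rv})) -
    2 * Module.finrank F
      ((Submodule.span F ((fun i => plucker u (Pi.single i (1 : F))) '' {i | i ≠ ru})) ⊓
       (Submodule.span F ((fun i => plucker v (Pi.single i (1 : F))) '' {i | i ≠ rv})) :
        Submodule F ({p : Fin b × Fin b // p.1 < p.2} → F)) = 2 * b - 4 :=
  plucker_subspace_distance_general u v hu hv hUV ru rv hru hrv
end

section
/- Let u_1, ..., u_b be a basis of F_q^b. Then the set of vectors {φ(u_i; e_j) : i, j in [b]} spans all of F_q^{binom(b,2)}; in particular the matrix whose rows are these vectors has rank binom(b,2). -/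
section Plucker

variable {F : Type*} [Field F] {b : ℕ}

def pluckerLeft (c : Fin b → F) :
    (Fin b → F) →ₗ[F] ({p : Fin b × Fin b // p.1 < p.2} → F) where
  toFun a := plucker a c
  map_add' x y := by funext p; simp only [plucker, Pi.add_apply]; ring
  map_smul' r x := by funext p; simp only [plucker, Pi.smul_apply, smul_eq_mul,
    RingHom.id_apply]; ring

theorem plucker_single_single {k l : Fin b} (h : k < l) :
    plucker (Pi.single k (1 : F)) (Pi.single l 1) = Pi.single ⟨(k, l), h⟩ 1 := by
  funext ⟨⟨m, n⟩, hmn⟩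
  simp only [plucker, Pi.single_apply, Subtype.mk.injEq, Prod.mk.injEq]
  have not_swapped : m = l → n ≠ k := by rintro rfl rfl; exact hmn.asymm h
  split_ifs <;> simp_all

theorem card_fin_pairs_lt :
    Fintype.card {p : Fin b × Fin b // p.1 < p.2} = b.choose 2 := by
  rw [Fintype.card_subtype, Fintype.card_product_filter_lt, Fintype.card_fin]

theorem plucker_mem_span_of_span_eq_top {ι : Type*} {u : ι → Fin b → F}
    (hu : Submodule.span F (Set.range u) = ⊤) (a c : Fin b → F) :
    plucker a c ∈ Submodule.span F (Set.range fun i => plucker (u i) c) := by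
  have hrange : Set.range (fun i => plucker (u i) c) = pluckerLeft c '' Set.range u := by
    rw [← Set.range_comp]; rfl
  rw [hrange, ← Submodule.map_span, hu]
  exact ⟨a, Submodule.mem_top, rfl⟩

theorem span_plucker_single_eq_top {ι : Type*} {u : ι → Fin b → F}
    (hu : Submodule.span F (Set.range u) = ⊤) :
    Submodule.span F
      (Set.range fun p : ι × Fin b => plucker (u p.1) (Pi.single p.2 (1 : F))) = ⊤ := by
  rw [eq_top_iff, ← (Pi.basisFun F _).span_eq, Submodule.span_le]
  rintro _ ⟨⟨⟨k, l⟩, h⟩, rfl⟩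
  rw [Pi.basisFun_apply, ← plucker_single_single h]
  refine Submodule.span_mono ?_ (plucker_mem_span_of_span_eq_top hu _ _)
  rintro _ ⟨i, rfl⟩
  exact ⟨(i, l), rfl⟩

end Plucker

theorem plucker_basis_single_span {F : Type*} [Field F] {b : ℕ}
    (u : Module.Basis (Fin b) F (Fin b → F)) :
    Submodule.span F
      (Set.range fun p : Fin b × Fin b => plucker (u p.1) (Pi.single p.2 (1 : F))) = ⊤ ∧
    (Matrix.of fun (p : Fin b × Fin b) => plucker (u p.1) (Pi.single p.2 (1 : F))).rank =
      Nat.choose b 2 := by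
  have hspan := span_plucker_single_eq_top u.span_eq
  refine ⟨hspan, ?_⟩
  rw [Matrix.rank_eq_finrank_span_row, Matrix.of_row, hspan, finrank_top,
    Module.finrank_fintype_fun_eq_card, card_fin_pairs_lt]
end

section
/- Let c divide b, let {v_1,...,v_b} be a basis of F_q^b partitioned into b/c subsets A_i of size c, and let V_i be a set of representatives of all (q^c−1)/(q−1) one-dimensional subspaces of span(A_i). Then V = ∪_i V_i is a (q^{c−1}−1)-resilient spanning set: after removing any q^{c−1}−1 elements of V, the remaining elements still span F_q^b. -/
/-!
Fix a block `W = span (A i)`, of dimension `c`. If the surviving representatives `V i \ T` do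
not span `W`, they span a proper subspace `H < W`, and every vector of `W \ H` is a nonzero
multiple of a representative outside `H`, hence of one in `T`. There are at least
`q ^ c - q ^ (c - 1) = (q - 1) q ^ (c - 1)` such vectors and each representative accounts for
only `q - 1` of them, so `|T| ≥ q ^ (c - 1)`. Thus every block survives, and the blocks
together span the whole space.
-/

open Finset Module Submodule

theorem Module.Basis.finrank_span_image_finset {K M ι : Type*} [DivisionRing K] [AddCommGroup M]
    [Module K M] (v : Basis ι K M) (s : Finset ι) : finrank K (span K (v '' s)) = #s := by
  classical
  rw [← coe_image, finrank_span_finset_eq_card, card_image_of_injective _ v.injective]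
  rw [coe_image]
  exact (v.linearIndependent.linearIndepOn _).id_image

section FiniteField

variable {K M : Type*} [Field K] [Fintype K] [AddCommGroup M] [Module K M]

theorem card_le_mul_card_of_forall_mem_span_singleton {S R : Finset M}
    (hS : (0 : M) ∉ S) (hSR : ∀ x ∈ S, ∃ r ∈ R, x ∈ K ∙ r) :
    #S ≤ (Fintype.card K - 1) * #R := by
  classical
  have hcover : S ⊆ R.biUnion fun r => (univ.erase (0 : K)).image (· • r) := by
    intro x hx
    obtain ⟨r, hr, hxr⟩ := hSR x hx
    obtain ⟨a, rfl⟩ := mem_span_singleton.1 hxr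
    have ha : a ≠ 0 := by rintro rfl; exact hS (zero_smul K r ▸ hx)
    exact mem_biUnion.2 ⟨r, hr, mem_image.2 ⟨a, mem_erase.2 ⟨ha, mem_univ a⟩, rfl⟩⟩
  calc #S ≤ ∑ r ∈ R, #((univ.erase (0 : K)).image (· • r)) :=
        (card_le_card hcover).trans card_biUnion_le
    _ ≤ ∑ _r ∈ R, (Fintype.card K - 1) :=
        sum_le_sum fun r _ => card_image_le.trans (card_erase_of_mem (mem_univ (0 : K))).le
    _ = (Fintype.card K - 1) * #R := by rw [sum_const, smul_eq_mul, mul_comm]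

open Classical in
theorem Submodule.card_pred_mul_pow_le_card_mem_not_mem [Fintype M] {H W : Submodule K M}
    (hHW : H < W) :
    (Fintype.card K - 1) * Fintype.card K ^ (finrank K W - 1) ≤ #{x | x ∈ W ∧ x ∉ H} := by
  have hsplit : #{x | x ∈ W ∧ x ∉ H} = Fintype.card W - Fintype.card H := by
    rw [filter_and_not, card_sdiff_of_subset (monotone_filter_right _ fun _ _ hx => hHW.le hx),
      Fintype.card_subtype, Fintype.card_subtype]
  obtain ⟨c, hc⟩ := Nat.exists_eq_add_of_lt (finrank_lt_finrank_of_lt hHW)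
  have hH : Fintype.card K ^ finrank K H ≤ Fintype.card K ^ (finrank K H + c) :=
    Nat.pow_le_pow_right Fintype.card_pos (Nat.le_add_right _ _)
  rw [hsplit, card_eq_pow_finrank (K := K) (V := W), card_eq_pow_finrank (K := K) (V := H), hc,
    Nat.add_sub_cancel, pow_succ', Nat.sub_one_mul]
  omega

theorem le_span_sdiff_of_card_lt [Fintype M] [DecidableEq M] {W : Submodule K M}
    {R T : Finset M} (hRW : ∀ r ∈ R, r ∈ W) (hR : ∀ x ∈ W, x ≠ 0 → ∃ r ∈ R, x ∈ K ∙ r)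
    (hT : #T < Fintype.card K ^ (finrank K W - 1)) :
    W ≤ span K ((R \ T : Finset M) : Set M) := by
  classical
  set H := span K ((R \ T : Finset M) : Set M)
  by_contra hWH
  have hHW : H < W := lt_of_le_not_ge (span_le.2 fun r hr => hRW r (mem_sdiff.1 hr).1) hWH
  have hcover : ∀ x ∈ ({x | x ∈ W ∧ x ∉ H} : Finset M), ∃ r ∈ T, x ∈ K ∙ r := by
    intro x hx
    obtain ⟨hxW, hxH⟩ := (mem_filter.1 hx).2
    obtain ⟨r, hrR, hxr⟩ := hR x hxW (ne_of_mem_of_not_mem H.zero_mem hxH).symm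
    refine ⟨r, ?_, hxr⟩
    by_contra hrT
    exact hxH (span_singleton_le_iff_mem r H |>.2 (subset_span (mem_sdiff.2 ⟨hrR, hrT⟩)) hxr)
  have hcount := (card_pred_mul_pow_le_card_mem_not_mem hHW).trans
    (card_le_mul_card_of_forall_mem_span_singleton (by simp [H.zero_mem]) hcover)
  have hq : 0 < Fintype.card K - 1 := Nat.sub_pos_of_lt Fintype.one_lt_card
  exact hT.not_ge (Nat.le_of_mul_le_mul_left hcount hq)

end FiniteField

theorem partitioned_representatives_resilient_general {F : Type*} [Field F] [Fintype F]
    {q b c : ℕ} (hq : Fintype.card F = q) [DecidableEq (Fin b → F)]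
    (v : Module.Basis (Fin b) F (Fin b → F))
    (A : Fin (b / c) → Finset (Fin b))
    (hAcard : ∀ i, (A i).card = c)
    (hAcover : Finset.univ.biUnion A = Finset.univ)
    (V : Fin (b / c) → Finset (Fin b → F))
    (hVmem : ∀ i, ∀ w ∈ V i, w ≠ 0 ∧ w ∈ Submodule.span F (v '' (A i)))
    (hVrep : ∀ i, ∀ x : Fin b → F, x ∈ Submodule.span F (v '' (A i)) → x ≠ 0 →
      ∃! w, w ∈ V i ∧ Submodule.span F {w} = Submodule.span F {x}) :
    ∀ T ⊆ Finset.univ.biUnion V, T.card = q ^ (c - 1) - 1 →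
      Submodule.span F
        ((Finset.univ.biUnion V \ T : Finset (Fin b → F)) : Set (Fin b → F)) = ⊤ := by
  intro T _ hTcard
  have hpow : 0 < q ^ (c - 1) := pow_pos (hq ▸ Fintype.card_pos) _
  have hblock (i : Fin (b / c)) : span F (v '' A i) ≤ span F ↑(univ.biUnion V \ T) := by
    have hlines : ∀ x ∈ span F (v '' A i), x ≠ 0 → ∃ w ∈ V i, x ∈ F ∙ w := fun x hx hx0 => by
      obtain ⟨w, ⟨hw, hwx⟩, -⟩ := hVrep i x hx hx0
      exact ⟨w, hw, hwx ▸ mem_span_singleton_self x⟩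
    have hTsmall : #T < Fintype.card F ^ (finrank F (span F (v '' A i)) - 1) := by
      rw [v.finrank_span_image_finset, hAcard, hq]
      omega
    refine (le_span_sdiff_of_card_lt (fun w hw => (hVmem i w hw).2) hlines hTsmall).trans
      (span_mono ?_)
    exact coe_subset.2 (sdiff_subset_sdiff (subset_biUnion_of_mem V (mem_univ i)) subset_rfl)
  rw [eq_top_iff, ← v.span_eq, span_le]
  rintro _ ⟨j, rfl⟩
  obtain ⟨i, -, hj⟩ := mem_biUnion.1 (hAcover ▸ mem_univ j)
  exact hblock i (subset_span ⟨j, hj, rfl⟩)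

theorem partitioned_representatives_resilient {F : Type*} [Field F] [Fintype F] 
    {q b c : ℕ} (hq : Fintype.card F = q) (hc : 0 < c) (hcb : c ∣ b) [DecidableEq (Fin b → F)]
    (v : Module.Basis (Fin b) F (Fin b → F))
    (A : Fin (b / c) → Finset (Fin b))
    (hAdisj : ∀ i j, i ≠ j → Disjoint (A i) (A j))
    (hAcard : ∀ i, (A i).card = c)
    (hAcover : Finset.univ.biUnion A = Finset.univ)
    (V : Fin (b / c) → Finset (Fin b → F))
    (hVmem : ∀ i, ∀ w ∈ V i, w ≠ 0 ∧ w ∈ Submodule.span F (v '' (A i)))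
    (hVrep : ∀ i, ∀ x : Fin b → F, x ∈ Submodule.span F (v '' (A i)) → x ≠ 0 →
      ∃! w, w ∈ V i ∧ Submodule.span F {w} = Submodule.span F {x}) :
    ∀ T ⊆ Finset.univ.biUnion V, T.card = q ^ (c - 1) - 1 →
      Submodule.span F
        ((Finset.univ.biUnion V \ T : Finset (Fin b → F)) : Set (Fin b → F)) = ⊤ :=
  partitioned_representatives_resilient_general hq v A hAcard hAcover V hVmem hVrep
end

section
/- Let W be a c-dimensional vector space over F_q and let V be a set of representatives of all (q^c−1)/(q−1) one-dimensional subspaces of W. For any subset T of V with |T| ≤ q^{c−1}−1, the set V \ T spans W. -/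
/-!
If `V \ T` spanned a proper subspace, a nonzero functional `f` would vanish on it, so every
representative off `ker f` would lie in `T`. The `q ^ (c - 1)` points of the affine hyperplane
`f = 1` lie on pairwise distinct lines, none inside `ker f`, so their representatives are
`q ^ (c - 1)` distinct elements of `T`.
-/

open Module Submodule Finset

section

variable {F W : Type*} [Field F] [AddCommGroup W] [Module F W]

theorem Module.Dual.natCard_preimage_singleton [FiniteDimensional F W] {f : Dual F W}
    (hf : f ≠ 0) (a : F) :
    Nat.card (f ⁻¹' {a}) = Nat.card F ^ (finrank F W - 1) := by
  refine (Nat.card_congr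
    (f.toAddMonoidHom.fiberEquivKerOfSurjective (LinearMap.surjective hf) a)).trans ?_
  rw [← Nat.eq_sub_of_add_eq (Dual.finrank_ker_add_one_of_ne_zero hf)]
  exact natCard_eq_pow_finrank (V := LinearMap.ker f)

open Classical in
theorem Module.Dual.natCard_preimage_one_le_card_filter_apply_ne_zero (f : Dual F W)
    (V : Finset W) (hV : ∀ x : W, x ≠ 0 → ∃ w ∈ V, span F {w} = span F {x}) :
    Nat.card (f ⁻¹' {1}) ≤ #{w ∈ V | f w ≠ 0} := by
  have hrep (x : f ⁻¹' {1}) : ∃ w ∈ V, ∃ u : Fˣ, u • (x : W) = w := by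
    have hx : (x : W) ≠ 0 := fun h => by simpa [h] using x.2
    obtain ⟨w, hwV, hw⟩ := hV x hx
    exact ⟨w, hwV, span_singleton_eq_span_singleton.1 hw.symm⟩
  choose r hrV u hu using hrep
  have hfr (x : f ⁻¹' {1}) : f (r x) = u x := by
    rw [← hu, Units.smul_def, map_smul, x.2, smul_eq_mul, mul_one]
  have hr_inj : Function.Injective r := by
    intro x y hxy
    have huv : u x = u y := Units.val_injective (by rw [← hfr, ← hfr, hxy])
    rw [← hu, ← hu, huv] at hxy
    exact Subtype.ext (smul_right_injective W (u y).ne_zero hxy)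
  rw [← Nat.card_eq_finsetCard]
  refine Nat.card_le_card_of_injective (fun x => ⟨r x, mem_filter.2 ⟨hrV x, ?_⟩⟩) ?_
  · rw [hfr]
    exact (u x).ne_zero
  · exact fun x y hxy => hr_inj (congrArg Subtype.val hxy)

end

theorem representatives_resilient_general {F : Type*} [Field F] [Fintype F]
    {q c : ℕ} (hq : Fintype.card F = q)
    (W : Type*) [AddCommGroup W] [Module F W] [FiniteDimensional F W] [DecidableEq W]
    (hW : Module.finrank F W = c)
    (V : Finset W)
    (hVrep : ∀ x : W, x ≠ 0 →
      ∃! w, w ∈ V ∧ Submodule.span F {w} = Submodule.span F {x}) :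
    ∀ T ⊆ V, T.card ≤ q ^ (c - 1) - 1 →
      Submodule.span F ((V \ T : Finset W) : Set W) = ⊤ := by
  classical
  intro T _ hT
  by_contra hspan
  obtain ⟨f, hf, hker⟩ := exists_le_ker_of_lt_top _ (lt_top_iff_ne_top.2 hspan)
  have hoff_ker : {w ∈ V | f w ≠ 0} ⊆ T := by
    intro w hw
    rw [mem_filter] at hw
    by_contra hwT
    exact hw.2 (hker (subset_span (mem_sdiff.2 ⟨hw.1, hwT⟩)))
  have hcard : q ^ (c - 1) ≤ #T := by
    rw [← hq, ← hW, ← Nat.card_eq_fintype_card, ← Dual.natCard_preimage_singleton hf 1]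
    exact (Dual.natCard_preimage_one_le_card_filter_apply_ne_zero f V
      fun x hx => (hVrep x hx).exists).trans (card_le_card hoff_ker)
  have hpos : 0 < q ^ (c - 1) := pow_pos (hq ▸ Fintype.card_pos) _
  omega

theorem representatives_resilient {F : Type*} [Field F] [Fintype F]
    {q c : ℕ} (hq : Fintype.card F = q)
    (W : Type*) [AddCommGroup W] [Module F W] [FiniteDimensional F W] [DecidableEq W]
    (hW : Module.finrank F W = c)
    (V : Finset W)
    (hVmem : ∀ w ∈ V, w ≠ 0)
    (hVrep : ∀ x : W, x ≠ 0 →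
      ∃! w, w ∈ V ∧ Submodule.span F {w} = Submodule.span F {x}) :
    ∀ T ⊆ V, T.card ≤ q ^ (c - 1) - 1 →
      Submodule.span F ((V \ T : Finset W) : Set W) = ⊤ :=
  representatives_resilient_general hq W hW V hVrep
end

section
/- Let v_j be a nonzero vector in F_q^b with γ_s ≠ 0 at coordinate s, and let u_1, ..., u_{b'} be vectors whose span contains all standard basis vectors e_t for t in [b] \ {s}. Then the span of {φ(u_ℓ; v_j) : ℓ in [b']} contains the subspace P_{span(v_j)} = span{φ(v_j; e_i) : i ≠ r(v_j)}. -/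
/-- `plucker · v` as a linear map. -/
def pluckerL {F : Type*} [Field F] {b : ℕ} (v : Fin b → F) :
    (Fin b → F) →ₗ[F] ({p : Fin b × Fin b // p.1 < p.2} → F) where
  toFun a := plucker a v
  map_add' a c := by funext p; simp [plucker]; ring
  map_smul' m a := by funext p; simp [plucker]; ring

/-- `plucker v ·` as a linear map. -/
def pluckerR {F : Type*} [Field F] {b : ℕ} (v : Fin b → F) :
    (Fin b → F) →ₗ[F] ({p : Fin b × Fin b // p.1 < p.2} → F) where
  toFun c := plucker v c
  map_add' a c := by funext p; simp [plucker]; ring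
  map_smul' m a := by funext p; simp [plucker]; ring

theorem repair_span_contains {F : Type*} [Field F] {b b' : ℕ}
    (v : Fin b → F) (hv : v ≠ 0) (s : Fin b) (hs : v s ≠ 0)
    (r : Fin b) (hr : v r ≠ 0) (hrmin : ∀ i : Fin b, i < r → v i = 0)
    (u : Fin b' → (Fin b → F))
    (hu : ∀ t : Fin b, t ≠ s → Pi.single t (1 : F) ∈ Submodule.span F (Set.range u)) :
    Submodule.span F ((fun i => plucker v (Pi.single i (1 : F))) '' {i | i ≠ r}) ≤
      Submodule.span F (Set.range fun ℓ : Fin b' => plucker (u ℓ) v) := by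
  set S := Submodule.span F (Set.range fun ℓ : Fin b' => plucker (u ℓ) v) with hS
  have key : ∀ t : Fin b, t ≠ s → plucker (Pi.single t (1:F)) v ∈ S := by
    intro t ht
    have h1 : (pluckerL v) (Pi.single t (1:F)) ∈
        Submodule.map (pluckerL v) (Submodule.span F (Set.range u)) :=
      Submodule.mem_map_of_mem (hu t ht)
    rw [Submodule.map_span] at h1
    have h2 : (pluckerL v) '' Set.range u
        = Set.range fun ℓ : Fin b' => plucker (u ℓ) v := by
      rw [← Set.range_comp]; rfl
    rw [h2] at h1
    exact h1
  have key2 : ∀ i : Fin b, i ≠ s → plucker v (Pi.single i (1:F)) ∈ S := by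
    intro i hi
    have h3 : plucker v (Pi.single i (1:F)) = - plucker (Pi.single i (1:F)) v := by
      funext p; simp [plucker]; ring
    rw [h3]; exact S.neg_mem (key i hi)
  have keyall : ∀ i : Fin b, plucker v (Pi.single i (1:F)) ∈ S := by
    intro i
    by_cases hi : i = s
    · rw [hi]
      have hz : (pluckerR v) v = 0 := by
        funext p; simp [pluckerR, plucker]; ring
      have hv' : v = ∑ j, v j • (Pi.single j (1:F) : Fin b → F) := by
        funext x
        simp [Pi.single_apply, Finset.sum_apply, mul_ite]
      have hsum : ∑ j, v j • plucker v (Pi.single j (1:F)) = 0 := by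
        have h4 : (pluckerR v) (∑ j, v j • (Pi.single j (1:F) : Fin b → F)) = 0 := by
          rw [← hv']; exact hz
        rw [map_sum] at h4
        simp only [map_smul] at h4
        simpa [pluckerR] using h4
      have hsplit : v s • plucker v (Pi.single s (1:F))
          = - ∑ j ∈ Finset.univ.erase s, v j • plucker v (Pi.single j (1:F)) := by
        have h5 := Finset.add_sum_erase Finset.univ
          (fun j => v j • plucker v (Pi.single j (1:F))) (Finset.mem_univ s)
        rw [hsum] at h5
        linear_combination (norm := abel) h5
      have hmem : v s • plucker v (Pi.single s (1:F)) ∈ S := by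
        rw [hsplit]
        refine S.neg_mem (Submodule.sum_mem S ?_)
        intro j hj
        exact S.smul_mem _ (key2 j (Finset.ne_of_mem_erase hj))
      have h6 : plucker v (Pi.single s (1:F))
          = (v s)⁻¹ • (v s • plucker v (Pi.single s (1:F))) := by
        rw [smul_smul, inv_mul_cancel₀ hs, one_smul]
      rw [h6]
      exact S.smul_mem _ hmem
    · exact key2 i hi
  rw [Submodule.span_le]
  rintro x ⟨i, hi, rfl⟩
  exact keyall i
end

section
/- For every even integer b ≥ 2 there exists a b×b matrix N over F_2 such that: (1) the last column is zero; (2) N_{b,i} = 1 for all i in [b−1]; (3) all diagonal entries are zero; (4) for all i ≠ j, N_{i,j} ≠ N_{j,i}; and (5) every column except the last has Hamming weight b/2. -/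
/-!
Write b = 2s + 2. On ℤ/(2s+1) let i beat j iff j - i ∈ {1, …, s}: this is a tournament in
which every vertex is beaten by exactly s others. Adding a last vertex that beats all the others
gives a tournament on b vertices whose adjacency matrix over 𝔽₂ has all the required properties.
-/

open Finset

namespace Fin

theorem val_sub_add_val_sub {n : ℕ} {i j : Fin n} (h : i ≠ j) :
    (j - i).val + (i - j).val = n := by
  rcases h.lt_or_gt with hij | hji
  · rw [coe_sub_iff_le.2 hij.le, coe_sub_iff_lt.2 hij]
    omega
  · rw [coe_sub_iff_lt.2 hji, coe_sub_iff_le.2 hji.le]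
    omega

def RotationalTournament (s : ℕ) (i j : Fin (2 * s + 1)) : Prop :=
  1 ≤ (j - i).val ∧ (j - i).val ≤ s

instance (s : ℕ) : DecidableRel (RotationalTournament s) := fun _ _ =>
  inferInstanceAs (Decidable (_ ∧ _))

variable {s : ℕ}

theorem rotationalTournament_irrefl (i : Fin (2 * s + 1)) : ¬ RotationalTournament s i i := by
  simp [RotationalTournament]

theorem rotationalTournament_iff_not_swap {i j : Fin (2 * s + 1)} (h : i ≠ j) :
    RotationalTournament s i j ↔ ¬ RotationalTournament s j i := by
  have := val_sub_add_val_sub h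
  unfold RotationalTournament
  omega

theorem card_filter_rotationalTournament (j : Fin (2 * s + 1)) :
    #{i | RotationalTournament s i j} = s := by
  calc #{i | RotationalTournament s i j}
      = #{k : Fin (2 * s + 1) | 1 ≤ k.val ∧ k.val ≤ s} :=
        card_equiv (Equiv.subLeft j) fun _ => by
          simp only [mem_filter_univ, Equiv.subLeft_apply]; rfl
    _ = #{k ∈ range (2 * s + 1) | 1 ≤ k ∧ k ≤ s} := by
        rw [card_filter, card_filter,
          sum_univ_eq_sum_range (fun k => if 1 ≤ k ∧ k ≤ s then 1 else 0)]
    _ = #(Icc 1 s) := by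
        congr 1; ext k; simp only [mem_filter, mem_range, mem_Icc]; omega
    _ = s := by simp

variable {m : ℕ} (R : Fin m → Fin m → Prop)

def AddSource : Fin (m + 1) → Fin (m + 1) → Prop :=
  lastCases (· ≠ last m) fun i => lastCases False (R i)

variable {R}

@[simp]
theorem addSource_last_iff (j : Fin (m + 1)) : AddSource R (last m) j ↔ j ≠ last m := by
  simp [AddSource]

@[simp]
theorem not_addSource_castSucc_last (i : Fin m) : ¬ AddSource R (castSucc i) (last m) := by
  simp [AddSource]

@[simp]
theorem addSource_castSucc_castSucc_iff (i j : Fin m) :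
    AddSource R (castSucc i) (castSucc j) ↔ R i j := by
  simp [AddSource]

instance [DecidableRel R] : DecidableRel (AddSource R) := fun i j => by
  cases i using lastCases <;> cases j using lastCases <;>
    simp only [addSource_last_iff, not_addSource_castSucc_last, addSource_castSucc_castSucc_iff] <;>
    infer_instance

theorem addSource_irrefl (hR : ∀ i, ¬ R i i) (i : Fin (m + 1)) : ¬ AddSource R i i := by
  cases i using lastCases <;> simp [hR]

theorem addSource_iff_not_swap (hR : ∀ i j, i ≠ j → (R i j ↔ ¬ R j i)) {i j : Fin (m + 1)}
    (h : i ≠ j) : AddSource R i j ↔ ¬ AddSource R j i := by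
  cases i using lastCases <;> cases j using lastCases
  · exact absurd rfl h
  all_goals simp_all

theorem card_filter_addSource_castSucc [DecidableRel R] (j : Fin m) :
    #{i | AddSource R i (castSucc j)} = #{i | R i j} + 1 := by
  rw [card_filter, card_filter, sum_univ_castSucc]
  simp

end Fin

open Fin in
theorem exists_good_matrix_even {b : ℕ} (hb : 2 ≤ b) (heven : Even b) :
    ∃ N : Matrix (Fin b) (Fin b) (ZMod 2),
      (∀ i : Fin b, N i ⟨b - 1, by omega⟩ = 0) ∧
      (∀ i : Fin b, (i : ℕ) < b - 1 → N ⟨b - 1, by omega⟩ i = 1) ∧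
      (∀ i : Fin b, N i i = 0) ∧
      (∀ i j : Fin b, i ≠ j → N i j ≠ N j i) ∧
      (∀ j : Fin b, (j : ℕ) < b - 1 →
        (Finset.univ.filter fun i : Fin b => N i j ≠ 0).card = b / 2) := by
  obtain ⟨s, rfl⟩ : ∃ s, b = 2 * s + 1 + 1 := by
    obtain ⟨r, hr⟩ := heven
    exact ⟨r - 1, by omega⟩
  have hlast : (⟨2 * s + 1, by omega⟩ : Fin (2 * s + 1 + 1)) = last (2 * s + 1) := rfl
  have hcastSucc {i : Fin (2 * s + 1 + 1)} (hi : (i : ℕ) < 2 * s + 1 + 1 - 1) :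
      ∃ i', castSucc i' = i :=
    exists_castSucc_eq.2 (ne_of_val_ne hi.ne)
  let T := AddSource (RotationalTournament s)
  refine ⟨Matrix.of fun i j => if T i j then 1 else 0, ?_, ?_, ?_, ?_, ?_⟩
  · intro i
    cases i using lastCases <;> simp [hlast, T]
  · intro i hi
    obtain ⟨i, rfl⟩ := hcastSucc hi
    simp [hlast, T]
  · intro i
    simp [addSource_irrefl rotationalTournament_irrefl, T]
  · intro i j hij
    have hswap := addSource_iff_not_swap (fun _ _ => rotationalTournament_iff_not_swap) hij
    simp only [Matrix.of_apply, T, hswap]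
    split_ifs <;> decide
  · intro j hj
    obtain ⟨j, rfl⟩ := hcastSucc hj
    simp only [Matrix.of_apply, ne_eq, ite_eq_right_iff, one_ne_zero, imp_false, not_not]
    rw [card_filter_addSource_castSucc, card_filter_rotationalTournament]
    omega
end
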